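/- Let ε : ℝⁿ × ℝⁿ → (Fin n → Fin n → ℝ) be smooth and satisfy the integrability (zero curvature) condition ∂εᵣᵃ/∂xˢ + Σ_b (∂εᵣᵃ/∂yᵇ) εₛᵇ = ∂εₛᵃ/∂xʳ + Σ_b (∂εₛᵃ/∂yᵇ) εᵣᵇ for all indices a, r, s and all (x,y). Define the total derivative of a smooth θ : ℝⁿ × ℝⁿ → ℝ by (D_r θ)(x,y) = ∂θ/∂xʳ + Σ_a (∂θ/∂yᵃ) εᵣᵃ(x,y). Then D_s D_r θ = D_r D_s θ for all r, s. -/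

import Mathlib

/-! Proposition 12: the nonlinear horizontal differential satisfies d̃∘d̃ = 0,
i.e. the total derivatives commute when the nonlinear curvature vanishes. -/

noncomputable section

open scoped BigOperators

/-- partial derivative in the source variable `x` (direction `r`). -/
def pdx {n : ℕ} (f : (Fin n → ℝ) × (Fin n → ℝ) → ℝ) (r : Fin n)
    (p : (Fin n → ℝ) × (Fin n → ℝ)) : ℝ :=
  fderiv ℝ f p (Pi.single r 1, 0)

/-- partial derivative in the target variable `y` (direction `a`). -/
def pdy {n : ℕ} (f : (Fin n → ℝ) × (Fin n → ℝ) → ℝ) (a : Fin n)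
    (p : (Fin n → ℝ) × (Fin n → ℝ)) : ℝ :=
  fderiv ℝ f p (0, Pi.single a 1)

/-- The nonlinear total derivative `(D_r θ)(x,y) = ∂θ/∂xʳ + Σ_a (∂θ/∂yᵃ) εᵣᵃ(x,y)`. -/
def ntotalD {n : ℕ} (ε : (Fin n → ℝ) × (Fin n → ℝ) → Fin n → Fin n → ℝ)
    (θ : (Fin n → ℝ) × (Fin n → ℝ) → ℝ) (r : Fin n)
    (p : (Fin n → ℝ) × (Fin n → ℝ)) : ℝ :=
  pdx θ r p + ∑ a, pdy θ a p * ε p r a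

abbrev EE (n : ℕ) := (Fin n → ℝ) × (Fin n → ℝ)
def pd {n : ℕ} (f : EE n → ℝ) (v : EE n) (p : EE n) : ℝ := fderiv ℝ f p v

lemma pd_contDiff {n : ℕ} {f : EE n → ℝ} (hf : ContDiff ℝ (⊤ : ℕ∞) f) (v : EE n) :
    ContDiff ℝ 1 (pd f v) :=
  (hf.fderiv_right (m := 1) (WithTop.coe_le_coe.mpr le_top)).clm_apply contDiff_const

lemma pd_diff {n : ℕ} {f : EE n → ℝ} (hf : ContDiff ℝ (⊤ : ℕ∞) f) (v : EE n) (p : EE n) :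
    DifferentiableAt ℝ (pd f v) p :=
  ((pd_contDiff hf v).differentiable one_ne_zero).differentiableAt

lemma pd_symm {n : ℕ} {f : EE n → ℝ} (hf : ContDiff ℝ (⊤ : ℕ∞) f) (v w p : EE n) :
    pd (pd f v) w p = pd (pd f w) v p := by
  have hsym : IsSymmSndFDerivAt ℝ f p := hf.contDiffAt.isSymmSndFDerivAt (by rw [minSmoothness_of_isRCLikeNormedField]; exact WithTop.coe_le_coe.mpr le_top)
  have hc : DifferentiableAt ℝ (fderiv ℝ f) p :=
    ((hf.fderiv_right (m := 1) (WithTop.coe_le_coe.mpr le_top)).differentiable one_ne_zero) p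
  have key : ∀ u w : EE n, pd (pd f u) w p = fderiv ℝ (fderiv ℝ f) p w u := by
    intro u w
    show fderiv ℝ (fun q => fderiv ℝ f q u) p w = _
    rw [fderiv_clm_apply hc (differentiableAt_const u)]
    simp
  rw [key v w, key w v, hsym.eq]

lemma pd_ntotalD {n : ℕ} (ε : EE n → Fin n → Fin n → ℝ)
    (hε : ∀ r a : Fin n, ContDiff ℝ (⊤ : ℕ∞) fun p => ε p r a)
    {θ : EE n → ℝ} (hθ : ContDiff ℝ (⊤ : ℕ∞) θ) (r : Fin n) (v p : EE n) :
    pd (ntotalD ε θ r) v p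
      = pd (pd θ (Pi.single r 1, 0)) v p
        + ∑ a, (pd (pd θ (0, Pi.single a 1)) v p * ε p r a
            + pd θ (0, Pi.single a 1) p * pd (fun q => ε q r a) v p) := by
  have hmul : ∀ a : Fin n, DifferentiableAt ℝ (fun q => pd θ (0, Pi.single a 1) q * ε q r a) p :=
    fun a => (pd_diff hθ _ p).mul (((hε r a).differentiable (by simp)).differentiableAt)
  have hsum : DifferentiableAt ℝ (fun q => ∑ a, pd θ (0, Pi.single a 1) q * ε q r a) p :=
    DifferentiableAt.fun_sum fun a _ => hmul a
  show fderiv ℝ (fun q => pd θ (Pi.single r 1, 0) q + ∑ a, pd θ (0, Pi.single a 1) q * ε q r a) p v = _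
  rw [fderiv_fun_add (pd_diff hθ _ p) hsum, ContinuousLinearMap.add_apply,
    fderiv_fun_sum fun a _ => hmul a, ContinuousLinearMap.sum_apply]
  congr 1
  refine Finset.sum_congr rfl fun a _ => ?_
  rw [fderiv_fun_mul (pd_diff hθ _ p) (((hε r a).differentiable (by simp)).differentiableAt)]
  simp only [ContinuousLinearMap.add_apply, ContinuousLinearMap.smul_apply, smul_eq_mul]
  show pd θ _ p * pd (fun q => ε q r a) v p + ε p r a * pd (pd θ _) v p = _
  ring

theorem ntotalD_comm {n : ℕ}
    (ε : (Fin n → ℝ) × (Fin n → ℝ) → Fin n → Fin n → ℝ)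
    (hε : ∀ r a : Fin n, ContDiff ℝ (⊤ : ℕ∞) fun p => ε p r a)
    (hflat : ∀ (p : (Fin n → ℝ) × (Fin n → ℝ)) (a r s : Fin n),
      pdx (fun q => ε q r a) s p + ∑ b, pdy (fun q => ε q r a) b p * ε p s b
        = pdx (fun q => ε q s a) r p + ∑ b, pdy (fun q => ε q s a) b p * ε p r b)
    (θ : (Fin n → ℝ) × (Fin n → ℝ) → ℝ) (hθ : ContDiff ℝ (⊤ : ℕ∞) θ)
    (s r : Fin n) :
    ntotalD ε (ntotalD ε θ r) s = ntotalD ε (ntotalD ε θ s) r := by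
  funext p
  show pd (ntotalD ε θ r) (Pi.single s 1, 0) p
      + ∑ b, pd (ntotalD ε θ r) (0, Pi.single b 1) p * ε p s b
    = pd (ntotalD ε θ s) (Pi.single r 1, 0) p
      + ∑ b, pd (ntotalD ε θ s) (0, Pi.single b 1) p * ε p r b
  simp only [pd_ntotalD ε hε hθ]
  simp only [add_mul, Finset.sum_add_distrib, Finset.sum_mul]
  have e1 : pd (pd θ (Pi.single r 1, 0)) (Pi.single s 1, 0) p
      = pd (pd θ (Pi.single s 1, 0)) (Pi.single r 1, 0) p := pd_symm hθ _ _ p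
  have e2 : ∑ x : Fin n, pd (pd θ (0, Pi.single x 1)) (Pi.single s 1, 0) p * ε p r x
      = ∑ x : Fin n, pd (pd θ (Pi.single s 1, 0)) (0, Pi.single x 1) p * ε p r x :=
    Finset.sum_congr rfl fun x _ => by rw [pd_symm hθ]
  have e4 : ∑ x : Fin n, pd (pd θ (Pi.single r 1, 0)) (0, Pi.single x 1) p * ε p s x
      = ∑ x : Fin n, pd (pd θ (0, Pi.single x 1)) (Pi.single r 1, 0) p * ε p s x :=
    Finset.sum_congr rfl fun x _ => by rw [pd_symm hθ]
  have e5 : ∑ x : Fin n, ∑ i : Fin n,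
        pd (pd θ (0, Pi.single i 1)) (0, Pi.single x 1) p * ε p r i * ε p s x
      = ∑ x : Fin n, ∑ i : Fin n,
        pd (pd θ (0, Pi.single i 1)) (0, Pi.single x 1) p * ε p s i * ε p r x := by
    rw [Finset.sum_comm]
    refine Finset.sum_congr rfl fun x _ => Finset.sum_congr rfl fun i _ => ?_
    rw [pd_symm hθ]; ring
  have e36 : (∑ x : Fin n, pd θ (0, Pi.single x 1) p
        * pd (fun q => ε q r x) (Pi.single s 1, 0) p)
      + ∑ x : Fin n, ∑ i : Fin n, pd θ (0, Pi.single i 1) p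
        * pd (fun q => ε q r i) (0, Pi.single x 1) p * ε p s x
      = (∑ x : Fin n, pd θ (0, Pi.single x 1) p
        * pd (fun q => ε q s x) (Pi.single r 1, 0) p)
      + ∑ x : Fin n, ∑ i : Fin n, pd θ (0, Pi.single i 1) p
        * pd (fun q => ε q s i) (0, Pi.single x 1) p * ε p r x := by
    rw [Finset.sum_comm (f := fun x i => pd θ (0, Pi.single i 1) p
        * pd (fun q => ε q r i) (0, Pi.single x 1) p * ε p s x),
      Finset.sum_comm (f := fun x i => pd θ (0, Pi.single i 1) p
        * pd (fun q => ε q s i) (0, Pi.single x 1) p * ε p r x),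
      ← Finset.sum_add_distrib, ← Finset.sum_add_distrib]
    refine Finset.sum_congr rfl fun a _ => ?_
    have hfl : pd (fun q => ε q r a) (Pi.single s 1, 0) p
          + ∑ b : Fin n, pd (fun q => ε q r a) (0, Pi.single b 1) p * ε p s b
        = pd (fun q => ε q s a) (Pi.single r 1, 0) p
          + ∑ b : Fin n, pd (fun q => ε q s a) (0, Pi.single b 1) p * ε p r b :=
      hflat p a r s
    have expand : ∀ (r s : Fin n),
        pd θ (0, Pi.single a 1) p * pd (fun q => ε q r a) (Pi.single s 1, 0) p
          + ∑ x : Fin n, pd θ (0, Pi.single a 1) p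
            * pd (fun q => ε q r a) (0, Pi.single x 1) p * ε p s x
        = pd θ (0, Pi.single a 1) p * (pd (fun q => ε q r a) (Pi.single s 1, 0) p
          + ∑ b : Fin n, pd (fun q => ε q r a) (0, Pi.single b 1) p * ε p s b) := by
      intro r s
      rw [mul_add, Finset.mul_sum]
      congr 1
      exact Finset.sum_congr rfl fun b _ => by ring
    rw [expand, expand, hfl]
  linear_combination e1 + e2 + e4 + e5 + e36

end
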